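/- Let ε ~ N(0, σ²) and for α > 0 define ρ''(ε) = (α+1)(2π)^{-α/2} σ^{-α-2} (1 - α ε²/σ²) exp(-α ε²/(2σ²)). Then E[ρ''(ε)] = (α+1)^{-1/2} (2π)^{-α/2} σ^{-α-2}. -/

import Mathlib

/-!
With `b = (α + 1) / (2σ²)` the integrand is a constant times `(1 - (α/σ²) z²) e^{-b z²}`.
Since `(1 - 2b z²) e^{-b z²}` is the derivative of `z e^{-b z²}`, it integrates to zero, so
`∫ z² e^{-b z²} = √(π/b) / (2b)`, and the factor `1 - (α/σ²) z²` contributes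
`1 - α/(α+1) = 1/(α+1)` times the Gaussian integral `√(π/b) = √(2πσ²) / √(α+1)`.
-/

open MeasureTheory Real

theorem hasDerivAt_mul_exp_neg_mul_sq (b x : ℝ) :
    HasDerivAt (fun x : ℝ => x * exp (-b * x ^ 2)) ((1 - 2 * b * x ^ 2) * exp (-b * x ^ 2)) x := by
  have hexp : HasDerivAt (fun x : ℝ => exp (-b * x ^ 2)) (exp (-b * x ^ 2) * (-b * (2 * x))) x := by
    simpa using ((hasDerivAt_pow 2 x).const_mul (-b)).exp
  exact ((hasDerivAt_id' x).mul hexp).congr_deriv (by ring)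

theorem integrable_sq_mul_exp_neg_mul_sq {b : ℝ} (hb : 0 < b) :
    Integrable fun x : ℝ => x ^ 2 * exp (-b * x ^ 2) := by
  simpa [rpow_two] using integrable_rpow_mul_exp_neg_mul_sq hb (s := 2) (by norm_num)

theorem integral_one_sub_mul_sq_mul_exp_neg_mul_sq_eq_sub {b : ℝ} (hb : 0 < b) (c : ℝ) :
    ∫ x : ℝ, (1 - c * x ^ 2) * exp (-b * x ^ 2)
      = √(π / b) - c * ∫ x : ℝ, x ^ 2 * exp (-b * x ^ 2) := by
  have hsplit : (fun x : ℝ => (1 - c * x ^ 2) * exp (-b * x ^ 2))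
      = fun x => exp (-b * x ^ 2) - c * (x ^ 2 * exp (-b * x ^ 2)) := by
    funext x
    ring
  rw [hsplit, integral_sub (integrable_exp_neg_mul_sq hb)
      ((integrable_sq_mul_exp_neg_mul_sq hb).const_mul c), integral_const_mul, integral_gaussian]

theorem integral_sq_mul_exp_neg_mul_sq {b : ℝ} (hb : 0 < b) :
    ∫ x : ℝ, x ^ 2 * exp (-b * x ^ 2) = √(π / b) / (2 * b) := by
  have hderiv_int : Integrable fun x : ℝ => (1 - 2 * b * x ^ 2) * exp (-b * x ^ 2) := by
    refine ((integrable_exp_neg_mul_sq hb).sub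
      ((integrable_sq_mul_exp_neg_mul_sq hb).const_mul (2 * b))).congr (ae_of_all _ fun x => ?_)
    simp only [Pi.sub_apply]
    ring
  have hzero : ∫ x : ℝ, (1 - 2 * b * x ^ 2) * exp (-b * x ^ 2) = 0 :=
    integral_eq_zero_of_hasDerivAt_of_integrable (hasDerivAt_mul_exp_neg_mul_sq b)
      hderiv_int (integrable_mul_exp_neg_mul_sq hb)
  rw [integral_one_sub_mul_sq_mul_exp_neg_mul_sq_eq_sub hb] at hzero
  rw [eq_div_iff (by positivity)]
  linarith

theorem integral_one_sub_mul_sq_mul_exp_neg_mul_sq {b : ℝ} (hb : 0 < b) (c : ℝ) :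
    ∫ x : ℝ, (1 - c * x ^ 2) * exp (-b * x ^ 2) = (1 - c / (2 * b)) * √(π / b) := by
  rw [integral_one_sub_mul_sq_mul_exp_neg_mul_sq_eq_sub hb, integral_sq_mul_exp_neg_mul_sq hb]
  ring

theorem rpow_neg_one_half_eq_inv_sqrt {x : ℝ} (hx : 0 ≤ x) : x ^ (-(1 : ℝ) / 2) = (√x)⁻¹ := by
  rw [neg_div, rpow_neg hx, sqrt_eq_rpow]

theorem exp_neg_mul_sq_div_mul_exp_neg_sq_div (α : ℝ) {σ : ℝ} (hσ : σ ≠ 0) (z : ℝ) :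
    exp (-α * z ^ 2 / (2 * σ ^ 2)) * exp (-z ^ 2 / (2 * σ ^ 2))
      = exp (-((α + 1) / (2 * σ ^ 2)) * z ^ 2) := by
  rw [← exp_add]
  congr 1
  field_simp
  ring

/-- For `ε ~ N(0, σ²)` and
`ρ''(z) = (α+1)(2π)^{-α/2} σ^{-α-2} (1 - α z²/σ²) exp(-α z²/(2σ²))`,
`E[ρ''(ε)] = (α+1)^{-1/2} (2π)^{-α/2} σ^{-α-2}`. -/
theorem bhhj_second_deriv_mean (σ α : ℝ) (hσ : 0 < σ) (hα : 0 < α) :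
    (∫ z : ℝ,
      ((α + 1) * (2 * π) ^ (-α / 2) * σ ^ (-α - 2) * (1 - α * z ^ 2 / σ ^ 2) *
          Real.exp (-α * z ^ 2 / (2 * σ ^ 2))) *
        ((2 * π * σ ^ 2) ^ (-(1 : ℝ) / 2) * Real.exp (-z ^ 2 / (2 * σ ^ 2))))
      = (α + 1) ^ (-(1 : ℝ) / 2) * (2 * π) ^ (-α / 2) * σ ^ (-α - 2) := by
  set b := (α + 1) / (2 * σ ^ 2) with hb_def
  have hb : 0 < b := by positivity
  have hintegrand (z : ℝ) :
      ((α + 1) * (2 * π) ^ (-α / 2) * σ ^ (-α - 2) * (1 - α * z ^ 2 / σ ^ 2) *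
          exp (-α * z ^ 2 / (2 * σ ^ 2))) *
        ((2 * π * σ ^ 2) ^ (-(1 : ℝ) / 2) * exp (-z ^ 2 / (2 * σ ^ 2)))
      = (α + 1) * (2 * π) ^ (-α / 2) * σ ^ (-α - 2) * (2 * π * σ ^ 2) ^ (-(1 : ℝ) / 2) *
          ((1 - α / σ ^ 2 * z ^ 2) * exp (-b * z ^ 2)) := by
    rw [← exp_neg_mul_sq_div_mul_exp_neg_sq_div α hσ.ne' z]
    ring
  have hfactor : 1 - α / σ ^ 2 / (2 * b) = (α + 1)⁻¹ := by
    rw [hb_def]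
    field_simp
    ring
  have hsqrt : √(π / b) = √(2 * π * σ ^ 2) / √(α + 1) := by
    rw [← sqrt_div (by positivity), hb_def]
    field_simp
  simp_rw [hintegrand]
  rw [integral_const_mul, integral_one_sub_mul_sq_mul_exp_neg_mul_sq hb, hfactor, hsqrt,
    rpow_neg_one_half_eq_inv_sqrt (by positivity), rpow_neg_one_half_eq_inv_sqrt (by positivity)]
  have : 0 < √(2 * π * σ ^ 2) := sqrt_pos.mpr (by positivity)
  have : 0 < √(α + 1) := sqrt_pos.mpr (by positivity)
  field_simp
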